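/- arXiv:2601.11738 — 7 statements merged into one kernel-verified Lean document; each statement's English description precedes it below -/
import Mathlib

section
/- The ternary operation f(x,y,z) = x + y + z + 1 on ZMod 2 is strictly nonderived: there is no binary operation ∘ on ZMod 2 such that (x ∘ y) ∘ z = x + y + z + 1 for all x, y, z ∈ ZMod 2. -/
/-- The ternary operation `f(x,y,z) = x + y + z + 1` on `ZMod 2`
is strictly nonderived: no binary operation `∘` on `ZMod 2` satisfies
`(x ∘ y) ∘ z = x + y + z + 1` for all `x, y, z`. -/
theorem affine_ternary_strictly_nonderived :
    ¬ ∃ op : ZMod 2 → ZMod 2 → ZMod 2,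
        ∀ x y z : ZMod 2, op (op x y) z = x + y + z + 1 := by
  decide
end

section
/- Let k be a commutative ring and n ≥ 2. For x ∈ k let X(x) be the block-shift (n−1)×(n−1) matrix over k with entries X(x)_{i,j} = x if j ≡ i + 1 (mod n−1) and 0 otherwise. Then for any x₁, x₂, …, xₙ ∈ k the ordinary matrix product of the n matrices satisfies X(x₁) · X(x₂) · ⋯ · X(xₙ) = X(x₁x₂⋯xₙ); in particular the set of block-shift matrices is closed under the n-ary matrix multiplication. -/
/-- The block-shift `(n−1) × (n−1)` matrix `X(x)` with entries
`X(x)_{i,j} = x` if `j ≡ i + 1 (mod n−1)` and `0` otherwise. -/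
def blockShift (n : ℕ) {k : Type*} [CommRing k] (x : k) :
    Matrix (Fin (n - 1)) (Fin (n - 1)) k :=
  Matrix.of fun i j => if (j : ℕ) = ((i : ℕ) + 1) % (n - 1) then x else 0

/-- Generalized shift: shift by `s` with entry `x`. -/
def genShift (n : ℕ) {k : Type*} [CommRing k] (s : ℕ) (x : k) :
    Matrix (Fin (n - 1)) (Fin (n - 1)) k :=
  Matrix.of fun i j => if (j : ℕ) = ((i : ℕ) + s) % (n - 1) then x else 0

lemma genShift_mul {k : Type*} [CommRing k] (n : ℕ) (hn : 2 ≤ n) (s : ℕ) (x y : k) :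
    genShift n s x * blockShift n y = genShift n (s + 1) (x * y) := by
  have hm : 0 < n - 1 := by omega
  ext i j
  simp only [Matrix.mul_apply, genShift, blockShift, Matrix.of_apply]
  rw [Finset.sum_eq_single (⟨((i : ℕ) + s) % (n - 1), Nat.mod_lt _ hm⟩ : Fin (n - 1))]
  · simp only [if_true, eq_self_iff_true]
    rw [Nat.mod_add_mod, ← Nat.add_assoc]
    simp
  · intro b _ hb
    rw [if_neg, zero_mul]
    intro h
    exact hb (Fin.ext h)
  · intro h
    exact absurd (Finset.mem_univ _) h

lemma genShift_zero_one {k : Type*} [CommRing k] (n : ℕ) (hn : 2 ≤ n) :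
    genShift n 0 (1 : k) = 1 := by
  ext i j
  simp only [genShift, Matrix.of_apply, Nat.add_zero, Nat.mod_eq_of_lt i.isLt,
    Matrix.one_apply]
  simp [Fin.ext_iff, eq_comm]

lemma genShift_list {k : Type*} [CommRing k] (n : ℕ) (hn : 2 ≤ n) (s : ℕ) (x : k)
    (l : List k) :
    genShift n s x * (l.map (blockShift n)).prod = genShift n (s + l.length) (x * l.prod) := by
  induction l generalizing s x with
  | nil => simp
  | cons a t ih =>
    simp only [List.map_cons, List.prod_cons, ← mul_assoc, genShift_mul n hn,
      ih, List.length_cons, List.prod_cons]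
    ring_nf

/-- the ordinary matrix product of the `n` block-shift matrices
`X(x₁), …, X(xₙ)` is the block-shift matrix `X(x₁ ⋯ xₙ)`; in particular the
block-shift matrices are closed under `n`-ary matrix multiplication. -/
theorem blockShift_nary_product {k : Type*} [CommRing k] (n : ℕ) (hn : 2 ≤ n)
    (x : Fin n → k) :
    (List.ofFn fun i => blockShift n (x i)).prod = blockShift n (∏ i, x i) := by
  have h1 : (List.ofFn fun i => blockShift n (x i)) = (List.ofFn x).map (blockShift n) := by
    simp [List.map_ofFn]; rfl
  have := genShift_list n hn 0 (1 : k) (List.ofFn x)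
  rw [genShift_zero_one n hn, one_mul, one_mul] at this
  rw [h1, this]
  ext i j
  simp only [genShift, blockShift, Matrix.of_apply, List.length_ofFn, List.prod_ofFn]
  have : ((i : ℕ) + (0 + n)) % (n - 1) = ((i : ℕ) + 1) % (n - 1) := by
    have : (i : ℕ) + (0 + n) = ((i : ℕ) + 1) + (n - 1) := by omega
    rw [this, Nat.add_mod_right]
  rw [this]
end

section
/- Let k be a field and n ≥ 3. For x ∈ k let X(x) be the block-shift (n−1)×(n−1) matrix over k with entries X(x)_{i,j} = x if j ≡ i + 1 (mod n−1) and 0 otherwise. If x, y ∈ k satisfy x·y ≠ 0, then the binary matrix product X(x) · X(y) is not a block-shift matrix: X(x) · X(y) ≠ X(z) for every z ∈ k. Hence the n-ary multiplication on block-shift matrices is strictly nonderived from binary matrix multiplication. -/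
lemma blockShift_mul_apply {k : Type*} [CommRing k] (n : ℕ) (hn : 3 ≤ n)
    (x y : k) (i j : Fin (n - 1)) :
    (blockShift n x * blockShift n y) i j =
      if (j : ℕ) = ((i : ℕ) + 2) % (n - 1) then x * y else 0 := by
  have hm : 2 ≤ n - 1 := by omega
  have hmpos : 0 < n - 1 := by omega
  rw [Matrix.mul_apply]
  simp only [blockShift, Matrix.of_apply]
  rw [Finset.sum_eq_single (⟨((i : ℕ) + 1) % (n - 1), Nat.mod_lt _ hmpos⟩ : Fin (n - 1))]
  · simp only [if_pos rfl]
    have h4 : (((i : ℕ) + 1) % (n - 1) + 1) % (n - 1) = ((i : ℕ) + 2) % (n - 1) :=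
      (Nat.mod_modEq ((i : ℕ) + 1) (n - 1)).add_right 1
    rw [h4]
    rw [mul_ite, mul_zero]
    simp
  · intro b _ hb
    have : (b : ℕ) ≠ ((i : ℕ) + 1) % (n - 1) := by
      intro h
      apply hb
      exact Fin.ext h
    rw [if_neg this, zero_mul]
  · intro h
    exact absurd (Finset.mem_univ _) h

/-- over a field, for `n ≥ 3`, if `x·y ≠ 0` then the binary
product `X(x) · X(y)` is not a block-shift matrix; hence the `n`-ary
multiplication of block-shift matrices is strictly nonderived from the binary
matrix multiplication. -/
theorem blockShift_binary_product_not_blockShift {k : Type*} [Field k]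
    (n : ℕ) (hn : 3 ≤ n) (x y : k) (hxy : x * y ≠ 0) :
    ∀ z : k, blockShift n x * blockShift n y ≠ blockShift n z := by
  intro z h
  have hmpos : 0 < n - 1 := by omega
  set i0 : Fin (n - 1) := ⟨0, hmpos⟩
  set j0 : Fin (n - 1) := ⟨2 % (n - 1), Nat.mod_lt _ hmpos⟩
  have h1 := congrFun (congrFun h i0) j0
  rw [blockShift_mul_apply n hn] at h1
  simp only [blockShift, Matrix.of_apply, i0, j0] at h1
  rw [if_pos trivial] at h1
  have h3 : (2 : ℕ) % (n - 1) ≠ (0 + 1) % (n - 1) := by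
    have hm : 2 ≤ n - 1 := by omega
    rcases Nat.lt_or_ge 2 (n - 1) with h | h
    · rw [Nat.mod_eq_of_lt h, Nat.zero_add, Nat.mod_eq_of_lt (by omega)]; omega
    · have : n - 1 = 2 := by omega
      simp [this]
  rw [if_neg h3] at h1
  exact hxy h1
end

section
/- Let k be a field and n ≥ 3. For x ∈ k let X(x) be the block-shift (n−1)×(n−1) matrix over k with entries X(x)_{i,j} = x if j ≡ i + 1 (mod n−1) and 0 otherwise. If x ≠ 0, then the block-shift matrix X((x^{n−2})⁻¹) is the querelement of X(x) with respect to the n-ary matrix multiplication: X(x)^{n−1} · X((x^{n−2})⁻¹) = X(x). -/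
/-! `X(x) = x • P`, where `P` is the permutation matrix of the cyclic rotation `i ↦ i + 1` of
`Fin (n - 1)`. As `P ^ (n - 1) = 1`, we get `X(x) ^ (n - 1) * X(y) = X(x ^ (n - 1) * y)`, and
`x ^ (n - 1) * (x ^ (n - 2))⁻¹ = x` for `x ≠ 0`. -/

theorem Equiv.Perm.permMatrix_pow {ι R : Type*} [DecidableEq ι] [Fintype ι] [Semiring R]
    (σ : Equiv.Perm ι) (p : ℕ) : σ.permMatrix R ^ p = (σ ^ p).permMatrix R := by
  induction p with
  | zero => simp
  | succ p ih => rw [pow_succ', ih, pow_succ, Matrix.permMatrix_mul]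

theorem finRotate_pow_self (m : ℕ) : finRotate m ^ m = 1 := by
  rcases lt_or_ge m 2 with hm | hm
  · have : Subsingleton (Fin m) := Fin.subsingleton_iff_le_one.2 (by omega)
    exact Subsingleton.elim _ _
  · have hord : orderOf (finRotate m) = m := by
      rw [(isCycle_finRotate_of_le hm).orderOf, support_finRotate_of_le hm, Finset.card_univ,
        Fintype.card_fin]
    simpa only [hord] using pow_orderOf_eq_one (finRotate m)

theorem finRotate_apply_eq_iff {m : ℕ} (i j : Fin m) :
    finRotate m i = j ↔ (j : ℕ) = ((i : ℕ) + 1) % m := by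
  obtain ⟨m, rfl⟩ : ∃ m', m = m' + 1 := Nat.exists_eq_succ_of_ne_zero i.pos.ne'
  rw [Fin.ext_iff, coe_finRotate, eq_comm]
  split_ifs with h
  · subst h
    simp
  · have := Fin.val_lt_last h
    rw [Nat.mod_eq_of_lt (by omega)]

theorem blockShift_eq_smul_permMatrix (n : ℕ) {k : Type*} [CommRing k] (x : k) :
    blockShift n x = x • (finRotate (n - 1)).permMatrix k := by
  ext i j
  simp only [blockShift, Matrix.of_apply, Matrix.smul_apply, PEquiv.toMatrix_apply,
    Equiv.toPEquiv_apply, Option.mem_def, Option.some_inj, finRotate_apply_eq_iff]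
  split_ifs <;> simp

theorem blockShift_pow_sub_one_mul (n : ℕ) {k : Type*} [CommRing k] (x y : k) :
    blockShift n x ^ (n - 1) * blockShift n y = blockShift n (x ^ (n - 1) * y) := by
  simp only [blockShift_eq_smul_permMatrix, smul_pow, Equiv.Perm.permMatrix_pow,
    finRotate_pow_self, Matrix.permMatrix_one, smul_mul_smul, one_mul]

/-- over a field, for `n ≥ 3` and `x ≠ 0`, the block-shift matrix
`X((x^{n−2})⁻¹)` is the querelement of `X(x)` for the `n`-ary matrix
multiplication: `X(x)^{n−1} · X((x^{n−2})⁻¹) = X(x)`. -/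
theorem blockShift_querelement {k : Type*} [Field k] (n : ℕ) (hn : 3 ≤ n)
    (x : k) (hx : x ≠ 0) :
    (blockShift n x) ^ (n - 1) * blockShift n ((x ^ (n - 2))⁻¹) =
      blockShift n x := by
  rw [blockShift_pow_sub_one_mul]
  congr 1
  rw [show n - 1 = n - 2 + 1 by omega, pow_succ', mul_inv_cancel_right₀ (pow_ne_zero _ hx)]
end

section
/- Let k be a field and n ≥ 3. For x ∈ k let X(x) be the block-shift (n−1)×(n−1) matrix over k with entries X(x)_{i,j} = x if j ≡ i + 1 (mod n−1) and 0 otherwise, and set E = X(1). Then E is a polyadic identity for the n-ary matrix multiplication, namely E^{n−1} · X(x) = X(x) for all x ∈ k (equivalently E^{n−1} equals the usual identity matrix), yet E itself is not the usual identity matrix: X(1) ≠ 1. -/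
theorem val_finRotate {m : ℕ} (i : Fin m) : (finRotate m i : ℕ) = ((i : ℕ) + 1) % m := by
  cases m with
  | zero => exact i.elim0
  | succ m => rw [finRotate_apply, Fin.val_add, Fin.val_one', Nat.add_mod_mod]

theorem orderOf_finRotate {m : ℕ} (hm : 2 ≤ m) : orderOf (finRotate m) = m := by
  rw [← Equiv.Perm.lcm_cycleType, cycleType_finRotate_of_le hm, Multiset.lcm_singleton,
    normalize_eq]

namespace Matrix

variable {ι R : Type*} [DecidableEq ι]

theorem permMatrix_pow [Fintype ι] [Semiring R] (σ : Equiv.Perm ι) (j : ℕ) :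
    (σ ^ j).permMatrix R = σ.permMatrix R ^ j := by
  simpa using map_pow (permMatrixHom (n := ι) (R := R)) σ⁻¹ j

theorem permMatrix_eq_one_iff [MulZeroOneClass R] [Nontrivial R] {σ : Equiv.Perm ι} :
    σ.permMatrix R = 1 ↔ σ = 1 := by
  rw [← permMatrix_one, PEquiv.toMatrix_injective.eq_iff]
  exact ⟨fun h => Equiv.ext fun i => Option.some_injective _ (PEquiv.ext_iff.1 h i), congrArg _⟩

end Matrix

/-- over a field, for `n ≥ 3`, `E = X(1)` is a polyadic identity
for the `n`-ary matrix multiplication: `E^{n−1} · X(x) = X(x)` for all `x`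
(equivalently `E^{n−1}` is the usual identity matrix), yet `E` itself is not
the usual identity matrix. -/
theorem blockShift_polyadic_identity {k : Type*} [Field k] (n : ℕ)
    (hn : 3 ≤ n) :
    (∀ x : k, (blockShift n (1 : k)) ^ (n - 1) * blockShift n x =
        blockShift n x) ∧
      (blockShift n (1 : k)) ^ (n - 1) = 1 ∧
      blockShift n (1 : k) ≠ 1 := by
  have hE : blockShift n (1 : k) = (finRotate (n - 1)).permMatrix k := by
    rw [blockShift_eq_smul_permMatrix, one_smul]
  have hord : orderOf (finRotate (n - 1)) = n - 1 := orderOf_finRotate (by omega)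
  have hpow : blockShift n (1 : k) ^ (n - 1) = 1 := by
    rw [hE, ← Matrix.permMatrix_pow, orderOf_dvd_iff_pow_eq_one.1 hord.dvd, Matrix.permMatrix_one]
  refine ⟨fun x => by rw [hpow, one_mul], hpow, ?_⟩
  rw [hE, Ne, Matrix.permMatrix_eq_one_iff, ← orderOf_eq_one_iff, hord]
  omega
end

section
/- Let a, b ∈ ℤ with b > 0, and let S = {a + k·b : k ∈ ℤ} ⊆ ℤ be the congruence class of a modulo b. For m ≥ 2, the class S is closed under m-ary addition (i.e. for all y₁, …, yₘ ∈ S one has y₁ + ⋯ + yₘ ∈ S) if and only if b divides a·(m−1), i.e. if and only if the arity-shape invariant I^{[m]}(a,b) = a(m−1)/b is an integer. -/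
/-- the congruence class `S = {a + k·b : k ∈ ℤ}` is closed under
`m`-ary addition iff `b ∣ a·(m−1)`, i.e. iff the arity-shape invariant
`I^{[m]}(a,b) = a(m−1)/b` is an integer. -/
theorem congruenceClass_closed_mary_addition_iff (a b : ℤ) (hb : 0 < b)
    (m : ℕ) (hm : 2 ≤ m)
    (S : Set ℤ) (hS : S = {y : ℤ | ∃ k : ℤ, y = a + k * b}) :
    (∀ y : Fin m → ℤ, (∀ i, y i ∈ S) → (∑ i, y i) ∈ S) ↔
      b ∣ a * ((m : ℤ) - 1) := by
  subst hS
  constructor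
  · intro h
    have ha : ∀ i : Fin m, (fun _ : Fin m => a) i ∈ {y : ℤ | ∃ k : ℤ, y = a + k * b} := by
      intro i; exact ⟨0, by ring⟩
    obtain ⟨k, hk⟩ := h (fun _ => a) ha
    refine ⟨k, ?_⟩
    have : (∑ _i : Fin m, a) = (m : ℤ) * a := by
      simp [Finset.sum_const, mul_comm]
    rw [this] at hk
    linarith [hk]
  · rintro ⟨c, hc⟩ y hy
    choose k hk using hy
    refine ⟨c + ∑ i, k i, ?_⟩
    have hsum : (∑ i, y i) = (m : ℤ) * a + (∑ i, k i) * b := by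
      calc (∑ i, y i) = ∑ i, (a + k i * b) := by
            exact Finset.sum_congr rfl (fun i _ => hk i)
        _ = (m : ℤ) * a + (∑ i, k i) * b := by
            rw [Finset.sum_add_distrib, ← Finset.sum_mul]
            simp [Finset.sum_const, mul_comm]
    rw [hsum]
    have : ((m : ℤ)) * a = a + a * ((m : ℤ) - 1) := by ring
    rw [this, hc]
    ring
end

section
/- Let a, b ∈ ℤ with b > 0, and let S = {a + k·b : k ∈ ℤ} ⊆ ℤ be the congruence class of a modulo b. For n ≥ 2, the class S is closed under n-ary multiplication (i.e. for all y₁, …, yₙ ∈ S one has y₁ · y₂ · ⋯ · yₙ ∈ S) if and only if b divides aⁿ − a, i.e. if and only if the arity-shape invariant J^{[n]}(a,b) = a(a^{n−1}−1)/b is an integer. -/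
/-- the congruence class `S = {a + k·b : k ∈ ℤ}` is closed under
`n`-ary multiplication iff `b ∣ aⁿ − a`, i.e. iff the arity-shape invariant
`J^{[n]}(a,b) = a(a^{n−1}−1)/b` is an integer. -/
theorem congruenceClass_closed_nary_multiplication_iff (a b : ℤ) (hb : 0 < b)
    (n : ℕ) (hn : 2 ≤ n)
    (S : Set ℤ) (hS : S = {y : ℤ | ∃ k : ℤ, y = a + k * b}) :
    (∀ y : Fin n → ℤ, (∀ i, y i ∈ S) → (∏ i, y i) ∈ S) ↔
      b ∣ a ^ n - a := by
  subst hS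
  have hmem : ∀ y : ℤ, (y ∈ {y : ℤ | ∃ k : ℤ, y = a + k * b}) ↔ b ∣ y - a := by
    intro y
    constructor
    · rintro ⟨k, rfl⟩; exact ⟨k, by ring⟩
    · rintro ⟨k, hk⟩; exact ⟨k, by linarith [hk]⟩
  constructor
  · intro h
    have h1 := h (fun _ => a) (fun i => ⟨0, by ring⟩)
    rw [hmem] at h1
    simpa using h1
  · intro hdvd y hy
    rw [hmem]
    have hyi : ∀ i, y i ≡ a [ZMOD b] := by
      intro i
      obtain ⟨k, hk⟩ := hy i
      exact Int.modEq_iff_dvd.mpr ⟨-k, by linarith⟩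
    have key : ∀ s : Finset (Fin n), (∏ i ∈ s, y i) ≡ a ^ s.card [ZMOD b] := by
      intro s
      induction s using Finset.induction_on with
      | empty => simp
      | @insert x s hx ih =>
        rw [Finset.prod_insert hx, Finset.card_insert_of_notMem hx, pow_succ, mul_comm (a ^ s.card) a]
        exact (hyi x).mul ih
    have h2 := key Finset.univ
    simp only [Finset.card_univ, Fintype.card_fin] at h2
    have h3 : (a : ℤ) ^ n ≡ a [ZMOD b] := Int.modEq_iff_dvd.mpr (by rw [← neg_sub]; exact dvd_neg.mpr hdvd)
    have := h2.trans h3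
    exact (Int.modEq_iff_dvd.mp this.symm)
end
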